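/- arXiv:1901.02750 — 6 statements merged into one kernel-verified Lean document; each statement's English description precedes it below -/
import Mathlib

section
/- Let W ≥ 0, λ > 0, δ > 0, α > 0 be reals and let f : ℕ → ℝ be a strictly increasing positive function. For each time slot t define the per-slot cost Δ_t(x) = W·exp(−x·λ·δ) + α·f(t)·x for x ∈ ℕ. If k ∈ ℕ minimizes Δ_t over {0,1,…,H} (i.e., Δ_t(k) ≤ Δ_t(x) for all x ≤ H) and t' > t, then for every x' ∈ {0,…,H} with x' > k we have Δ_{t'}(k) < Δ_{t'}(x'). -/
/-! A larger storage price penalises a larger number of helpers more: the gap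
`Δ t' x' - Δ t' k` exceeds `Δ t x' - Δ t k ≥ 0` by `α (f t' - f t) (x' - k) > 0`. -/

theorem add_mul_lt_add_mul_of_le_of_lt {R : Type*} [CommRing R] [LinearOrder R]
    [IsStrictOrderedRing R] {u v a b k x : R}
    (hle : u + a * k ≤ v + a * x) (hab : a < b) (hkx : k < x) :
    u + b * k < v + b * x := by
  have hgap : 0 < (b - a) * (x - k) := mul_pos (sub_pos.2 hab) (sub_pos.2 hkx)
  linarith [show (b - a) * (x - k) = b * x - b * k - (a * x - a * k) by ring]

theorem stmt_0_general (W lam δ α : ℝ)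
    (hα : 0 < α) (f : ℕ → ℝ) (hf : StrictMono f)
    (Δ : ℕ → ℕ → ℝ)
    (hΔ : ∀ t x, Δ t x = W * Real.exp (-(x : ℝ) * lam * δ) + α * f t * x)
    (H k t t' : ℕ)
    (hmin : ∀ x ≤ H, Δ t k ≤ Δ t x)
    (htt' : t < t')
    (x' : ℕ) (hx'H : x' ≤ H) (hkx' : k < x') :
    Δ t' k < Δ t' x' := by
  have hle := hmin x' hx'H
  rw [hΔ, hΔ] at hle ⊢
  exact add_mul_lt_add_mul_of_le_of_lt hle (mul_lt_mul_of_pos_left (hf htt') hα)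
    (Nat.cast_lt.2 hkx')

/-- Lemma 1: if `k` minimizes the per-slot cost `Δ t x = W·exp(−xλδ) + α·f(t)·x`
over `{0,…,H}` in slot `t`, then in any later slot `t' > t`, any `x' ∈ {0,…,H}`
with `x' > k` has strictly larger cost than `k`. -/
theorem stmt_0 (W lam δ α : ℝ) (hW : 0 ≤ W) (hlam : 0 < lam) (hδ : 0 < δ)
    (hα : 0 < α) (f : ℕ → ℝ) (hf : StrictMono f) (hfpos : ∀ t, 0 < f t)
    (Δ : ℕ → ℕ → ℝ)
    (hΔ : ∀ t x, Δ t x = W * Real.exp (-(x : ℝ) * lam * δ) + α * f t * x)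
    (H k t t' : ℕ) (hkH : k ≤ H)
    (hmin : ∀ x ≤ H, Δ t k ≤ Δ t x)
    (htt' : t < t')
    (x' : ℕ) (hx'H : x' ≤ H) (hkx' : k < x') :
    Δ t' k < Δ t' x' :=
  stmt_0_general W lam δ α hα f hf Δ hΔ H k t t' hmin htt' x' hx'H hkx'
end

section
/- Let W ≥ 0, λ > 0, δ > 0 be reals and let f : ℕ → ℝ be strictly increasing and positive, α > 0. For each t, let m(t) be the least minimizer over {0,…,H} of Δ_t(x) = W·exp(−x·λ·δ) + α·f(t)·x. Then m is monotone non-increasing: t ≤ t' implies m(t') ≤ m(t). -/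
/-!
Write `a = m t`, `b = m t'` with `t < t'`. The difference `Δ t' x - Δ t x = α (f t' - f t) x`
is strictly increasing in `x`, so if `a < b` then `Δ t a ≤ Δ t b` would force `Δ t' b < Δ t' a`,
contradicting that `b` is the least minimizer of `Δ t'`.
-/

theorem le_of_minimizer_of_strictMono_sub {α : Type*} [LinearOrder α] {φ ψ : α → ℝ}
    (hsub : StrictMono (ψ - φ)) {a b : α} (ha : φ a ≤ φ b) (hb : ψ a ≤ ψ b → b ≤ a) :
    b ≤ a := by
  by_contra! hab
  have hexcess : ψ a - φ a < ψ b - φ b := hsub hab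
  exact hab.not_ge (hb (by linarith))

theorem stmt_2_general (W lam δ α : ℝ)
    (hα : 0 < α) (f : ℕ → ℝ) (hf : StrictMono f)
    (Δ : ℕ → ℕ → ℝ)
    (hΔ : ∀ t x, Δ t x = W * Real.exp (-(x : ℝ) * lam * δ) + α * f t * x)
    (H : ℕ) (m : ℕ → ℕ)
    (hmH : ∀ t, m t ≤ H)
    (hmin : ∀ t, ∀ x ≤ H, Δ t (m t) ≤ Δ t x)
    (hleast : ∀ t, ∀ x ≤ H, Δ t x ≤ Δ t (m t) → m t ≤ x) :
    ∀ t t', t ≤ t' → m t' ≤ m t := by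
  intro t t' htt'
  rcases htt'.eq_or_lt with rfl | hlt
  · exact le_rfl
  have hexcess : Δ t' - Δ t = fun x : ℕ => α * (f t' - f t) * x := by
    funext x
    simp only [Pi.sub_apply, hΔ]
    ring
  refine le_of_minimizer_of_strictMono_sub (φ := Δ t) (ψ := Δ t') ?_
    (hmin t _ (hmH t')) (hleast t' _ (hmH t))
  rw [hexcess]
  exact Nat.strictMono_cast.const_mul (mul_pos hα (sub_pos.mpr (hf hlt)))

/-- The least minimizer `m t` of the per-slot cost
`Δ t x = W·exp(−xλδ) + α·f(t)·x` over `{0,…,H}` is non-increasing in `t`. -/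
theorem stmt_2 (W lam δ α : ℝ) (hW : 0 ≤ W) (hlam : 0 < lam) (hδ : 0 < δ)
    (hα : 0 < α) (f : ℕ → ℝ) (hf : StrictMono f) (hfpos : ∀ t, 0 < f t)
    (Δ : ℕ → ℕ → ℝ)
    (hΔ : ∀ t x, Δ t x = W * Real.exp (-(x : ℝ) * lam * δ) + α * f t * x)
    (H : ℕ) (m : ℕ → ℕ)
    (hmH : ∀ t, m t ≤ H)
    (hmin : ∀ t, ∀ x ≤ H, Δ t (m t) ≤ Δ t x)
    (hleast : ∀ t, ∀ x ≤ H, Δ t x ≤ Δ t (m t) → m t ≤ x) :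
    ∀ t t', t ≤ t' → m t' ≤ m t :=
  stmt_2_general W lam δ α hα f hf Δ hΔ H m hmH hmin hleast
end

section
/- Let Δ_t : ℕ → ℝ, t = 1,…,T, be cost functions of the form Δ_t(x) = W·exp(−x·λ·δ) + α·f(t)·x with W ≥ 0, λ, δ, α > 0 and f strictly increasing positive. Fix x₁ ∈ {0,…,H} and define the greedy sequence by x*_1 = x₁ and x*_t = argmin over {0,…,x*_{t−1}} of Δ_t (taking the least minimizer). Then for every non-increasing sequence (y_t) with y_1 = x₁ and y_t ∈ {0,…,H}, we have ∑_{t=1}^{T} Δ_t(x*_t) ≤ ∑_{t=1}^{T} Δ_t(y_t). -/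
/-!
The greedy schedule is in fact optimal slot by slot: `Δ_t(x*_t) ≤ Δ_t(y_t)` for every `t`.
By induction on `t`, either `y_t ≤ x*_t`, so that `y_t` competes in the greedy minimization
at slot `t`, or `x*_t` minimizes `Δ_t` over all of `ℕ`. The second alternative arises from
discrete convexity of `Δ_t`: once `x*_t < y_t ≤ x*_{t-1}`, the minimizer over `{0, …, x*_{t-1}}`
lies strictly inside that range, hence is global. It then persists because `Δ_{t+1} - Δ_t`
is nondecreasing in `x`: a count `u > x*_t` that costs at least `Δ_t(x*_t)` at slot `t` still
costs at least `Δ_{t+1}(x*_t)` at slot `t + 1`.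
-/

open Finset

section DiscreteConvexity

variable {g : ℕ → ℝ}

theorem le_of_le_succ_of_monotone_sub (hg : Monotone fun x => g (x + 1) - g x) {x : ℕ}
    (hx : g x ≤ g (x + 1)) {u : ℕ} (hxu : x ≤ u) : g x ≤ g u := by
  induction u, hxu using Nat.le_induction with
  | base => exact le_rfl
  | succ m hxm ih => linarith [hg hxm]

theorem forall_le_of_forall_le_Iic_of_lt (hg : Monotone fun x => g (x + 1) - g x) {x a : ℕ}
    (hmin : ∀ u ≤ a, g x ≤ g u) (hxa : x < a) (u : ℕ) : g x ≤ g u := by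
  rcases le_total u a with hua | hau
  · exact hmin u hua
  · exact le_of_le_succ_of_monotone_sub hg (hmin (x + 1) hxa) (by omega)

end DiscreteConvexity

section Greedy

variable {Δ : ℕ → ℕ → ℝ} {T : ℕ} {xs y : ℕ → ℕ}

theorem greedy_le_or_forall_le
    (hconv : ∀ t, Monotone fun x => Δ t (x + 1) - Δ t x)
    (hdiff : ∀ t u v, u ≤ v → Δ t v - Δ t u ≤ Δ (t + 1) v - Δ (t + 1) u)
    (hgreedy : ∀ t, 1 ≤ t → t < T →
      xs (t + 1) ≤ xs t ∧ ∀ u ≤ xs t, Δ (t + 1) (xs (t + 1)) ≤ Δ (t + 1) u)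
    (hy1 : y 1 = xs 1) (hy : ∀ t, 1 ≤ t → t < T → y (t + 1) ≤ y t) :
    ∀ t, 1 ≤ t → t ≤ T → y t ≤ xs t ∨ ∀ u, Δ t (xs t) ≤ Δ t u := by
  intro t ht
  induction t, ht using Nat.le_induction with
  | base => exact fun _ => Or.inl hy1.le
  | succ n hn ih =>
    intro hnT
    obtain ⟨-, hmin⟩ := hgreedy n hn hnT
    rcases le_or_gt (y (n + 1)) (xs (n + 1)) with hle | hlt
    · exact Or.inl hle
    right
    rcases ih (by omega) with hyx | hglob
    · exact forall_le_of_forall_le_Iic_of_lt (hconv _) hmin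
        (by linarith [hy n hn hnT] : xs (n + 1) < xs n)
    · intro u
      rcases le_total u (xs n) with hu | hu
      · exact hmin u hu
      · linarith [hdiff n (xs n) u hu, hglob u, hmin (xs n) le_rfl]

theorem greedy_apply_le
    (hconv : ∀ t, Monotone fun x => Δ t (x + 1) - Δ t x)
    (hdiff : ∀ t u v, u ≤ v → Δ t v - Δ t u ≤ Δ (t + 1) v - Δ (t + 1) u)
    (hgreedy : ∀ t, 1 ≤ t → t < T →
      xs (t + 1) ≤ xs t ∧ ∀ u ≤ xs t, Δ (t + 1) (xs (t + 1)) ≤ Δ (t + 1) u)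
    (hy1 : y 1 = xs 1) (hy : ∀ t, 1 ≤ t → t < T → y (t + 1) ≤ y t) :
    ∀ t ∈ Icc 1 T, Δ t (xs t) ≤ Δ t (y t) := by
  intro t ht
  obtain ⟨h1, hT⟩ := mem_Icc.1 ht
  rcases greedy_le_or_forall_le hconv hdiff hgreedy hy1 hy t h1 hT with hyx | hglob
  · obtain rfl | h2 := eq_or_lt_of_le h1
    · rw [hy1]
    obtain ⟨s, rfl⟩ : ∃ s, t = s + 1 := ⟨t - 1, by omega⟩
    obtain ⟨hxs, hmin⟩ := hgreedy s (by omega) hT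
    exact hmin _ (hyx.trans hxs)
  · exact hglob _

end Greedy

section CachingCost

noncomputable def cachingCost (W lam δ α : ℝ) (f : ℕ → ℝ) (t x : ℕ) : ℝ :=
  W * Real.exp (-(x : ℝ) * lam * δ) + α * f t * x

variable {W lam δ α : ℝ} {f : ℕ → ℝ}

theorem cachingCost_succ_sub (t x : ℕ) :
    cachingCost W lam δ α f t (x + 1) - cachingCost W lam δ α f t x
      = α * f t - W * (1 - Real.exp (-(lam * δ))) * Real.exp (-(x : ℝ) * lam * δ) := by
  simp only [cachingCost]
  push_cast
  rw [show -((x : ℝ) + 1) * lam * δ = -(x : ℝ) * lam * δ + -(lam * δ) by ring, Real.exp_add]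
  ring

theorem monotone_cachingCost_succ_sub (hW : 0 ≤ W) (hlamδ : 0 ≤ lam * δ) (t : ℕ) :
    Monotone fun x => cachingCost W lam δ α f t (x + 1) - cachingCost W lam δ α f t x := by
  intro a b hab
  simp only [cachingCost_succ_sub]
  have hdecay : 0 ≤ W * (1 - Real.exp (-(lam * δ))) :=
    mul_nonneg hW (sub_nonneg.2 (Real.exp_le_one_iff.2 (by linarith)))
  have hexp : Real.exp (-(b : ℝ) * lam * δ) ≤ Real.exp (-(a : ℝ) * lam * δ) := by
    rw [Real.exp_le_exp]
    nlinarith [mul_le_mul_of_nonneg_right (Nat.cast_le.2 hab : (a : ℝ) ≤ b) hlamδ]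
  nlinarith [mul_le_mul_of_nonneg_left hexp hdecay]

theorem cachingCost_sub_le_succ_sub (hα : 0 ≤ α) (hf : Monotone f) (t : ℕ) {u v : ℕ}
    (huv : u ≤ v) :
    cachingCost W lam δ α f t v - cachingCost W lam δ α f t u
      ≤ cachingCost W lam δ α f (t + 1) v - cachingCost W lam δ α f (t + 1) u := by
  simp only [cachingCost]
  nlinarith [mul_nonneg (mul_nonneg hα (sub_nonneg.2 (hf t.le_succ)))
    (sub_nonneg.2 (Nat.cast_le.2 huv : (u : ℝ) ≤ v))]

end CachingCost

theorem stmt_3_general (W lam δ α : ℝ) (hW : 0 ≤ W) (hlam : 0 < lam) (hδ : 0 < δ)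
    (hα : 0 < α) (f : ℕ → ℝ) (hf : StrictMono f)
    (Δ : ℕ → ℕ → ℝ)
    (hΔ : ∀ t x, Δ t x = W * Real.exp (-(x : ℝ) * lam * δ) + α * f t * x)
    (T x₁ : ℕ)
    (xs : ℕ → ℕ) (hxs1 : xs 1 = x₁)
    (hgreedy : ∀ t, 2 ≤ t → t ≤ T →
      xs t ≤ xs (t - 1) ∧
      (∀ u ≤ xs (t - 1), Δ t (xs t) ≤ Δ t u) ∧
      (∀ u ≤ xs (t - 1), Δ t u ≤ Δ t (xs t) → xs t ≤ u))
    (y : ℕ → ℕ) (hy1 : y 1 = x₁)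
    (hymono : ∀ t, 2 ≤ t → t ≤ T → y t ≤ y (t - 1)) :
    ∑ t ∈ Finset.Icc 1 T, Δ t (xs t) ≤ ∑ t ∈ Finset.Icc 1 T, Δ t (y t) := by
  obtain rfl : Δ = cachingCost W lam δ α f := funext₂ hΔ
  refine sum_le_sum (greedy_apply_le
    (monotone_cachingCost_succ_sub hW (mul_nonneg hlam.le hδ.le))
    (fun t _ _ => cachingCost_sub_le_succ_sub hα.le hf.monotone t)
    (fun t ht htT => ?_) (hy1.trans hxs1.symm) (fun t ht htT => ?_))
  · obtain ⟨hxs, hmin, -⟩ := hgreedy (t + 1) (by omega) htT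
    exact ⟨hxs, hmin⟩
  · exact hymono (t + 1) (by omega) htT

/-- Optimality of the greedy schedule among non-increasing schedules with the
same initial helper count (Lemma 2 of the paper). -/
theorem stmt_3 (W lam δ α : ℝ) (hW : 0 ≤ W) (hlam : 0 < lam) (hδ : 0 < δ)
    (hα : 0 < α) (f : ℕ → ℝ) (hf : StrictMono f) (hfpos : ∀ t, 0 < f t)
    (Δ : ℕ → ℕ → ℝ)
    (hΔ : ∀ t x, Δ t x = W * Real.exp (-(x : ℝ) * lam * δ) + α * f t * x)
    (T H x₁ : ℕ) (hx₁ : x₁ ≤ H)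
    (xs : ℕ → ℕ) (hxs1 : xs 1 = x₁)
    (hgreedy : ∀ t, 2 ≤ t → t ≤ T →
      xs t ≤ xs (t - 1) ∧
      (∀ u ≤ xs (t - 1), Δ t (xs t) ≤ Δ t u) ∧
      (∀ u ≤ xs (t - 1), Δ t u ≤ Δ t (xs t) → xs t ≤ u))
    (y : ℕ → ℕ) (hy1 : y 1 = x₁)
    (hyH : ∀ t, 1 ≤ t → t ≤ T → y t ≤ H)
    (hymono : ∀ t, 2 ≤ t → t ≤ T → y t ≤ y (t - 1)) :
    ∑ t ∈ Finset.Icc 1 T, Δ t (xs t) ≤ ∑ t ∈ Finset.Icc 1 T, Δ t (y t) :=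
  stmt_3_general W lam δ α hW hlam hδ hα f hf Δ hΔ T x₁ xs hxs1 hgreedy y hy1 hymono
end

section
/- Let f : ℕ → ℝ be strictly increasing with f(t) > 0 for all t, and α, W, λ, δ > 0. Define m(t) as the least minimizer over ℕ of Δ_t(x) = W·exp(−x·λ·δ) + α·f(t)·x. If f(t) → ∞ as t → ∞, then there exists T₀ such that m(t) = 0 for all t ≥ T₀. -/
/-! Once `α·f(t) ≥ W`, caching a single unit already costs at least `W` in storage, which is the
whole cost `Δ t 0 = W` of caching nothing, so `0` minimizes `Δ t` and the least minimizer is `0`. -/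

open Filter

lemma le_mul_exp_neg_add_mul_natCast {W c : ℝ} (hW : 0 ≤ W) (hWc : W ≤ c) (κ : ℝ) (x : ℕ) :
    W ≤ W * Real.exp (-(x : ℝ) * κ) + c * x := by
  rcases Nat.eq_zero_or_pos x with rfl | hx
  · simp
  · have hexp : 0 ≤ W * Real.exp (-(x : ℝ) * κ) := by positivity
    have hcx : c ≤ c * x := le_mul_of_one_le_right (hW.trans hWc) (by exact_mod_cast hx)
    linarith

theorem stmt_10_general (W lam δ α : ℝ) (hW : 0 < W)
    (hα : 0 < α) (f : ℕ → ℝ)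
    (hftop : Filter.Tendsto f Filter.atTop Filter.atTop)
    (Δ : ℕ → ℕ → ℝ)
    (hΔ : ∀ t x, Δ t x = W * Real.exp (-(x : ℝ) * lam * δ) + α * f t * x)
    (m : ℕ → ℕ)
    (hleast : ∀ t, ∀ x : ℕ, Δ t x ≤ Δ t (m t) → m t ≤ x) :
    ∃ T₀ : ℕ, ∀ t, T₀ ≤ t → m t = 0 := by
  obtain ⟨T₀, hT₀⟩ := eventually_atTop.mp (hftop.eventually_ge_atTop (W / α))
  refine ⟨T₀, fun t ht => Nat.le_zero.mp (hleast t 0 ?_)⟩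
  have hWc : W ≤ α * f t := (div_le_iff₀' hα).mp (hT₀ t ht)
  rw [hΔ, hΔ]
  simpa [mul_assoc] using le_mul_exp_neg_add_mul_natCast hW.le hWc (lam * δ) (m t)

/-- If the storage-cost function `f` tends to infinity, then eventually the
least minimizer of the per-slot cost `Δ t x = W·exp(−xλδ) + α·f(t)·x`
over `ℕ` is `0`: every content has finite optimal retention time. -/
theorem stmt_10 (W lam δ α : ℝ) (hW : 0 < W) (hlam : 0 < lam) (hδ : 0 < δ)
    (hα : 0 < α) (f : ℕ → ℝ) (hf : StrictMono f) (hfpos : ∀ t, 0 < f t)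
    (hftop : Filter.Tendsto f Filter.atTop Filter.atTop)
    (Δ : ℕ → ℕ → ℝ)
    (hΔ : ∀ t x, Δ t x = W * Real.exp (-(x : ℝ) * lam * δ) + α * f t * x)
    (m : ℕ → ℕ)
    (hmin : ∀ t, ∀ x : ℕ, Δ t (m t) ≤ Δ t x)
    (hleast : ∀ t, ∀ x : ℕ, Δ t x ≤ Δ t (m t) → m t ≤ x) :
    ∃ T₀ : ℕ, ∀ t, T₀ ≤ t → m t = 0 :=
  stmt_10_general W lam δ α hW hα f hftop Δ hΔ m hleast
end

section
/- Let W₁ ≥ W₂ ≥ 0 (request weights of two contents), and let g_i(x) = W_i·exp(−x·λ·δ) + c·x with λ, δ, c > 0. If k_i denotes the least minimizer of g_i over ℕ, then k₁ ≥ k₂: the more popular content is cached at at least as many helpers in the optimum. -/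
/- Topkis-style comparative statics: `g₁ - g₂ = (W₁ - W₂)·exp(-xλδ)` is antitone, so `g₁` has
decreasing differences relative to `g₂`. If the minimizer `k₁` of `g₁` lay strictly below the least
minimizer `k₂` of `g₂`, then moving from `k₂` down to `k₁` would not increase `g₁` and, by the
decreasing differences, would not increase `g₂` either, contradicting the leastness of `k₂`. -/

theorem le_of_forall_le_of_antitone_sub {α β : Type*} [LinearOrder α] [AddCommGroup β]
    [PartialOrder β] [IsOrderedAddMonoid β] {g₁ g₂ : α → β} (hsub : Antitone (g₁ - g₂))
    {k₁ k₂ : α} (hk₁min : ∀ x, g₁ k₁ ≤ g₁ x) (hk₂least : ∀ x, g₂ x ≤ g₂ k₂ → k₂ ≤ x) :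
    k₂ ≤ k₁ := by
  rcases le_total k₂ k₁ with h | h
  · exact h
  · apply hk₂least
    have hdiff : g₁ k₂ - g₂ k₂ ≤ g₁ k₁ - g₂ k₁ := hsub h
    have hstep : g₂ k₁ - g₂ k₂ ≤ g₁ k₁ - g₁ k₂ := by
      rw [sub_le_sub_iff] at hdiff ⊢
      rwa [add_comm (g₂ k₁)]
    exact sub_nonpos.mp (hstep.trans (sub_nonpos.mpr (hk₁min k₂)))

theorem antitone_exp_neg_mul {t : ℝ} (ht : 0 ≤ t) : Antitone fun x : ℝ => Real.exp (-x * t) :=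
  fun _ _ hxy => Real.exp_le_exp.mpr (by nlinarith)

theorem stmt_14_general (W₁ W₂ lam δ c : ℝ) (hW : W₂ ≤ W₁)
    (hlam : 0 < lam) (hδ : 0 < δ)
    (g₁ g₂ : ℕ → ℝ)
    (hg₁ : ∀ x, g₁ x = W₁ * Real.exp (-(x : ℝ) * lam * δ) + c * x)
    (hg₂ : ∀ x, g₂ x = W₂ * Real.exp (-(x : ℝ) * lam * δ) + c * x)
    (k₁ k₂ : ℕ)
    (hk₁min : ∀ x : ℕ, g₁ k₁ ≤ g₁ x)
    (hk₂least : ∀ x : ℕ, g₂ x ≤ g₂ k₂ → k₂ ≤ x) :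
    k₂ ≤ k₁ := by
  have hdecay : Antitone fun n : ℕ => Real.exp (-(n : ℝ) * lam * δ) := fun m n hmn => by
    simpa only [mul_assoc] using antitone_exp_neg_mul (mul_pos hlam hδ).le (Nat.cast_le.mpr hmn)
  have hsub : Antitone (g₁ - g₂) := fun m n hmn => by
    simp only [Pi.sub_apply, hg₁, hg₂, add_sub_add_right_eq_sub, ← sub_mul]
    exact mul_le_mul_of_nonneg_left (hdecay hmn) (sub_nonneg.mpr hW)
  exact le_of_forall_le_of_antitone_sub hsub hk₁min hk₂least

/-- Monotonicity of the optimal helper count in popularity: if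
`W₁ ≥ W₂ ≥ 0` and `k_i` is the least minimizer over `ℕ` of
`g_i(x) = W_i·exp(−xλδ) + c·x`, then `k₁ ≥ k₂`. -/
theorem stmt_14 (W₁ W₂ lam δ c : ℝ) (hW : W₂ ≤ W₁) (hW₂ : 0 ≤ W₂)
    (hlam : 0 < lam) (hδ : 0 < δ) (hc : 0 < c)
    (g₁ g₂ : ℕ → ℝ)
    (hg₁ : ∀ x, g₁ x = W₁ * Real.exp (-(x : ℝ) * lam * δ) + c * x)
    (hg₂ : ∀ x, g₂ x = W₂ * Real.exp (-(x : ℝ) * lam * δ) + c * x)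
    (k₁ k₂ : ℕ)
    (hk₁min : ∀ x : ℕ, g₁ k₁ ≤ g₁ x)
    (hk₁least : ∀ x : ℕ, g₁ x ≤ g₁ k₁ → k₁ ≤ x)
    (hk₂min : ∀ x : ℕ, g₂ k₂ ≤ g₂ x)
    (hk₂least : ∀ x : ℕ, g₂ x ≤ g₂ k₂ → k₂ ≤ x) :
    k₂ ≤ k₁ :=
  stmt_14_general W₁ W₂ lam δ c hW hlam hδ g₁ g₂ hg₁ hg₂ k₁ k₂ hk₁min hk₂least
end

section
/- Let T ∈ ℕ, and Δ_t(x) = W·exp(−x·λ·δ) + α·f(t)·x with W, λ, δ, α > 0 and f strictly increasing positive. Define z(x₁) = ∑_{t=1}^{T} Δ_t(x*_t) where (x*_t) is the greedy sequence starting from x₁ (x*_1 = x₁, x*_t = least argmin of Δ_t over {0,…,x*_{t−1}}). Then for all x₁, z(x₁) equals the minimum of ∑_{t=1}^{T} Δ_t(y_t) over non-increasing sequences (y_t) in {0,…,H}^T with y_1 = x₁, and moreover z can be computed with O(H·T) evaluations of the functions Δ_t (existence of such a computation is the content: z restricted to {0,…,H} is determined by the T·(H+1) values Δ_t(x)). 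-/
/-- The per-content value function `z(x₁)`, defined as the total cost of the
greedy schedule started at `x₁`, equals the minimum total cost over all
non-increasing schedules in `{0,…,H}` with initial value `x₁`; moreover `z`
on `{0,…,H}` is determined by the `T·(H+1)` values `Δ t x` for
`t ∈ {1,…,T}`, `x ≤ H` (so it can be computed with `O(H·T)` evaluations). -/
theorem stmt_15 (W lam δ α : ℝ) (hW : 0 < W) (hlam : 0 < lam) (hδ : 0 < δ)
    (hα : 0 < α) (f : ℕ → ℝ) (hf : StrictMono f) (hfpos : ∀ t, 0 < f t)
    (Δ : ℕ → ℕ → ℝ)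
    (hΔ : ∀ t x, Δ t x = W * Real.exp (-(x : ℝ) * lam * δ) + α * f t * x)
    (T H : ℕ) (xs : ℕ → ℕ → ℕ)
    (hxs1 : ∀ x₁ ≤ H, xs x₁ 1 = x₁)
    (hgreedy : ∀ x₁ ≤ H, ∀ t, 2 ≤ t → t ≤ T →
      xs x₁ t ≤ xs x₁ (t - 1) ∧
      (∀ u ≤ xs x₁ (t - 1), Δ t (xs x₁ t) ≤ Δ t u) ∧
      (∀ u ≤ xs x₁ (t - 1), Δ t u ≤ Δ t (xs x₁ t) → xs x₁ t ≤ u))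
    (z : ℕ → ℝ)
    (hz : ∀ x₁, z x₁ = ∑ t ∈ Finset.Icc 1 T, Δ t (xs x₁ t)) :
    ∀ x₁ ≤ H,
      (IsLeast
        ((fun y : ℕ → ℕ => ∑ t ∈ Finset.Icc 1 T, Δ t (y t)) ''
          {y : ℕ → ℕ | y 1 = x₁ ∧ (∀ t ∈ Finset.Icc 1 T, y t ≤ H) ∧
            ∀ t, 2 ≤ t → t ≤ T → y t ≤ y (t - 1)})
        (z x₁)) ∧
      (∀ Δ' : ℕ → ℕ → ℝ,
        (∀ t ∈ Finset.Icc 1 T, ∀ x ≤ H, Δ' t x = Δ t x) →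
        IsLeast
          ((fun y : ℕ → ℕ => ∑ t ∈ Finset.Icc 1 T, Δ' t (y t)) ''
            {y : ℕ → ℕ | y 1 = x₁ ∧ (∀ t ∈ Finset.Icc 1 T, y t ≤ H) ∧
              ∀ t, 2 ≤ t → t ≤ T → y t ≤ y (t - 1)})
          (z x₁)) := by
  intro x₁ hx₁
  -- difference function monotonicity: Δ t (x+1) - Δ t x ≤ Δ t' (x'+1) - Δ t' x' for t ≤ t', x ≤ x'
  have hDmono : ∀ t t' x x' : ℕ, t ≤ t' → x ≤ x' →
      Δ t (x + 1) - Δ t x ≤ Δ t' (x' + 1) - Δ t' x' := by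
    intro t t' x x' htt hxx
    rw [hΔ, hΔ, hΔ, hΔ]
    have hf' : f t ≤ f t' := hf.monotone htt
    have hs : 0 < lam * δ := mul_pos hlam hδ
    have hxx' : (x : ℝ) ≤ (x' : ℝ) := Nat.cast_le.mpr hxx
    have hE : Real.exp (-(x' : ℝ) * lam * δ) ≤ Real.exp (-(x : ℝ) * lam * δ) := by
      apply Real.exp_le_exp.mpr; nlinarith
    have hE1 : ∀ u : ℕ, Real.exp (-((u : ℕ) + 1 : ℝ) * lam * δ)
        = Real.exp (-(u : ℝ) * lam * δ) * Real.exp (-(lam * δ)) := by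
      intro u
      rw [← Real.exp_add]; ring_nf
    have hEx : Real.exp (-((x : ℝ) + 1) * lam * δ)
        = Real.exp (-(x : ℝ) * lam * δ) * Real.exp (-(lam * δ)) := hE1 x
    have hEx' : Real.exp (-((x' : ℝ) + 1) * lam * δ)
        = Real.exp (-(x' : ℝ) * lam * δ) * Real.exp (-(lam * δ)) := hE1 x'
    have he1 : Real.exp (-(lam * δ)) ≤ 1 := by
      rw [Real.exp_le_one_iff]; linarith
    have hEpos : 0 < Real.exp (-(x' : ℝ) * lam * δ) := Real.exp_pos _
    push_cast
    rw [hEx, hEx']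
    nlinarith [mul_nonneg (mul_nonneg hW.le (sub_nonneg.mpr hE)) (sub_nonneg.mpr he1),
      mul_le_mul_of_nonneg_left hf' hα.le]
  -- uphill lemma: if the difference is nonneg at a, Δ t is nondecreasing from a on
  have huphill : ∀ t a, 0 ≤ Δ t (a + 1) - Δ t a → ∀ v, a ≤ v → Δ t a ≤ Δ t v := by
    intro t a hD v hv
    induction v, hv using Nat.le_induction with
    | base => exact le_refl _
    | succ v hv IH =>
      have : 0 ≤ Δ t (v + 1) - Δ t v := le_trans hD (hDmono t t a v le_rfl hv)
      linarith
  -- greedy stays ≤ x₁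
  have hxsle : ∀ t, 1 ≤ t → t ≤ T → xs x₁ t ≤ x₁ := by
    intro t ht
    induction t, ht using Nat.le_induction with
    | base => intro _; rw [hxs1 x₁ hx₁]
    | succ t ht IH =>
      intro hT
      have h := (hgreedy x₁ hx₁ (t + 1) (by omega) hT).1
      simp only [Nat.add_sub_cancel] at h
      exact le_trans h (IH (by omega))
  -- the main generic statement
  have main : ∀ Δ'' : ℕ → ℕ → ℝ, (∀ t ∈ Finset.Icc 1 T, ∀ x ≤ H, Δ'' t x = Δ t x) →
      IsLeast
        ((fun y : ℕ → ℕ => ∑ t ∈ Finset.Icc 1 T, Δ'' t (y t)) ''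
          {y : ℕ → ℕ | y 1 = x₁ ∧ (∀ t ∈ Finset.Icc 1 T, y t ≤ H) ∧
            ∀ t, 2 ≤ t → t ≤ T → y t ≤ y (t - 1)})
        (z x₁) := by
    intro Δ'' hagr
    have hxsH : ∀ t ∈ Finset.Icc 1 T, xs x₁ t ≤ H := by
      intro t ht
      rw [Finset.mem_Icc] at ht
      exact le_trans (hxsle t ht.1 ht.2) hx₁
    constructor
    · refine ⟨xs x₁, ⟨hxs1 x₁ hx₁, hxsH, fun t h2 hT => (hgreedy x₁ hx₁ t h2 hT).1⟩, ?_⟩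
      rw [hz]
      exact Finset.sum_congr rfl fun t ht => hagr t ht _ (hxsH t ht)
    · rintro r ⟨y, ⟨hy1, hyH, hymono⟩, rfl⟩
      -- key termwise lemma
      have key : ∀ t, 1 ≤ t → t ≤ T →
          Δ t (xs x₁ t) ≤ Δ t (y t) ∧
          (xs x₁ t < y t → 0 ≤ Δ t (xs x₁ t + 1) - Δ t (xs x₁ t)) := by
        intro t ht
        induction t, ht using Nat.le_induction with
        | base =>
          intro _
          rw [hxs1 x₁ hx₁, hy1]
          exact ⟨le_refl _, fun h => absurd h (lt_irrefl _)⟩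
        | succ t ht IH =>
          intro hT1
          obtain ⟨h1, h2⟩ := IH (by omega)
          obtain ⟨hmon, hmin, _⟩ := hgreedy x₁ hx₁ (t + 1) (by omega) hT1
          simp only [Nat.add_sub_cancel] at hmon hmin
          have hymon : y (t + 1) ≤ y t := by
            have := hymono (t + 1) (by omega) hT1
            simpa using this
          by_cases hcase : y (t + 1) ≤ xs x₁ t
          · refine ⟨hmin _ hcase, fun hlt => ?_⟩
            have := hmin (xs x₁ (t + 1) + 1) (by omega)
            linarith
          · push_neg at hcase
            have hyt : xs x₁ t < y t := lt_of_lt_of_le hcase hymon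
            have hD0 : 0 ≤ Δ t (xs x₁ t + 1) - Δ t (xs x₁ t) := h2 hyt
            have hD0' : 0 ≤ Δ (t + 1) (xs x₁ t + 1) - Δ (t + 1) (xs x₁ t) :=
              le_trans hD0 (hDmono t (t + 1) _ _ (by omega) le_rfl)
            have hup : Δ (t + 1) (xs x₁ t) ≤ Δ (t + 1) (y (t + 1)) :=
              huphill (t + 1) (xs x₁ t) hD0' (y (t + 1)) (le_of_lt hcase)
            have hcap : Δ (t + 1) (xs x₁ (t + 1)) ≤ Δ (t + 1) (xs x₁ t) := hmin _ le_rfl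
            refine ⟨by linarith, fun hlt' => ?_⟩
            rcases lt_or_eq_of_le hmon with h | h
            · have := hmin (xs x₁ (t + 1) + 1) (by omega)
              linarith
            · rw [h]; exact hD0'
      have hsum : ∑ t ∈ Finset.Icc 1 T, Δ t (xs x₁ t) ≤ ∑ t ∈ Finset.Icc 1 T, Δ t (y t) := by
        apply Finset.sum_le_sum
        intro t ht
        rw [Finset.mem_Icc] at ht
        exact (key t ht.1 ht.2).1
      have heq : ∑ t ∈ Finset.Icc 1 T, Δ'' t (y t) = ∑ t ∈ Finset.Icc 1 T, Δ t (y t) :=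
        Finset.sum_congr rfl fun t ht => hagr t ht _ (hyH t ht)
      rw [hz]
      simp only [heq]
      exact hsum
  exact ⟨main Δ (fun t _ x _ => rfl), fun Δ' h => main Δ' h⟩
end
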